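/- Let G be a finite multidigraph that is k-out-regular for an integer k > 1, with an edge e* = (w*, v*). Then the kernel of the homomorphism τ̄ : K(𝓛G, e*) → cok ψ induced by the modified target map τ is exactly the k-torsion subgroup of K(𝓛G, e*), i.e. {x ∈ K(𝓛G, e*) : k·x = 0}. -/

import Mathlib

open Finsupp

/-- The Laplacian of a multidigraph with edge tail map `t` and head map `h`,
as a linear endomorphism of the free abelian group on the vertices. -/
noncomputable def lap {V E : Type*} [Fintype E] [DecidableEq V] (t h : E → V) :
    (V →₀ ℤ) →ₗ[ℤ] (V →₀ ℤ) :=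
  Finsupp.lift (V →₀ ℤ) ℤ V fun v =>
    ∑ e : E, if t e = v then Finsupp.single (h e) (1 : ℤ) - Finsupp.single v 1 else 0

/-- The modified Laplacian `φ_{G,w}` : sends `v ↦ Δ_G v` for `v ≠ w`, and `w ↦ w`. -/
noncomputable def phiMod {V E : Type*} [Fintype E] [DecidableEq V] (t h : E → V) (w : V) :
    (V →₀ ℤ) →ₗ[ℤ] (V →₀ ℤ) :=
  Finsupp.lift (V →₀ ℤ) ℤ V fun v =>
    if v = w then Finsupp.single w 1 else lap t h (Finsupp.single v 1)

/-- Edges of the directed line graph: pairs `(e, f)` with `e⁺ = f⁻`. -/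
def LineEdge {V E : Type*} (t h : E → V) : Type _ := {p : E × E // h p.1 = t p.2}

instance {V E : Type*} [Fintype E] [DecidableEq V] (t h : E → V) :
    Fintype (LineEdge t h) := by
  unfold LineEdge; infer_instance

/-- in-degree of a vertex -/
def indeg {V E : Type*} [Fintype E] [DecidableEq V] (h : E → V) (v : V) : ℕ :=
  (Finset.univ.filter fun e => h e = v).card

/-- out-degree of a vertex -/
def outdeg {V E : Type*} [Fintype E] [DecidableEq V] (t : E → V) (v : V) : ℕ :=
  (Finset.univ.filter fun e => t e = v).card

/-- The modified target map `τ`: `e ↦ e⁺` for `e ≠ e*`, `e* ↦ 0`. -/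
noncomputable def tau {V E : Type*} [DecidableEq E] (h : E → V) (estar : E) :
    (E →₀ ℤ) →ₗ[ℤ] (V →₀ ℤ) :=
  Finsupp.lift (V →₀ ℤ) ℤ E fun e =>
    if e = estar then 0 else Finsupp.single (h e) 1

/-- The map `ρ`: `e ↦ Δ_G(w*) − v* − w* + e⁺` for `e ≠ e*`, `e* ↦ 0`,
where `w* = t e*` and `v* = h e*`. -/
noncomputable def rho {V E : Type*} [Fintype E] [DecidableEq V] [DecidableEq E]
    (t h : E → V) (estar : E) : (E →₀ ℤ) →ₗ[ℤ] (V →₀ ℤ) :=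
  Finsupp.lift (V →₀ ℤ) ℤ E fun e =>
    if e = estar then 0 else
      lap t h (Finsupp.single (t estar) 1) - Finsupp.single (h estar) 1
        - Finsupp.single (t estar) 1 + Finsupp.single (h e) 1

/-- The map `ρ₀`: `v ↦ Δ_G(w*) − v* − w* + v`. -/
noncomputable def rho0 {V E : Type*} [Fintype E] [DecidableEq V] (t h : E → V) (estar : E) :
    (V →₀ ℤ) →ₗ[ℤ] (V →₀ ℤ) :=
  Finsupp.lift (V →₀ ℤ) ℤ V fun v =>
    lap t h (Finsupp.single (t estar) 1) - Finsupp.single (h estar) 1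
      - Finsupp.single (t estar) 1 + Finsupp.single v 1

/-- The map `ψ`: `v ↦ Δ_G v` for `v ≠ w*`, and `w* ↦ Δ_G(w*) − v*`. -/
noncomputable def psi {V E : Type*} [Fintype E] [DecidableEq V] (t h : E → V) (estar : E) :
    (V →₀ ℤ) →ₗ[ℤ] (V →₀ ℤ) :=
  Finsupp.lift (V →₀ ℤ) ℤ V fun v =>
    if v = t estar then
      lap t h (Finsupp.single (t estar) 1) - Finsupp.single (h estar) 1
    else lap t h (Finsupp.single v 1)

/-- The map `σ`: `v ↦ Σ_{e⁻ = v} e`. -/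
noncomputable def sigmaMap {V E : Type*} [Fintype E] [DecidableEq V] (t : E → V) :
    (V →₀ ℤ) →ₗ[ℤ] (E →₀ ℤ) :=
  Finsupp.lift (E →₀ ℤ) ℤ V fun v =>
    ∑ e : E, if t e = v then Finsupp.single e (1 : ℤ) else 0

/-!
Let `σ : ℤV → ℤE` send `v` to the sum of the edges leaving `v`, and `∂ : ℤE → ℤV`, `e ↦ e⁺`.
For a `k`-out-regular graph `Δ_G = ∂ ∘ σ - k` and `Δ_{𝓛G}(e) = σ(e⁺) - k e`, and since `τ`, `ψ`
differ from `∂`, `Δ_G` only by the term involving `e*`, one gets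
  `τ ∘ σ = ψ + k`  and  `φ = σ ∘ τ - k + (k + 1) π`,  where `π x = x(e*) e*` and `φ e* = e*`.
Since `τ e* = 0` they give `τ ∘ φ = ψ ∘ τ`, and modulo `im φ` they give `k x ≡ σ(τ x)` and
`σ(ψ u) ≡ 0`; so `τ x ∈ im ψ` forces `k x ∈ im φ`. Conversely, if `k x = φ y`, reading the second
identity at an edge `e ≠ e*` leaving `v` (one exists as `k > 1`) gives `k ∣ (τ y)(v)`. Writing
`τ y = k z`, we get `k τ x = τ φ y = ψ τ y = k ψ z`, so `τ x = ψ z` as `ℤV` is torsion-free.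
-/

lemma Finsupp.lift_single_one {R M X : Type*} [Semiring R] [AddCommMonoid M] [Module R M]
    (f : X → M) (a : X) : Finsupp.lift M R X f (Finsupp.single a 1) = f a := by
  simp

lemma Finsupp.exists_smul_eq_of_forall_dvd {α : Type*} {c : ℤ} {f : α →₀ ℤ}
    (hf : ∀ a, c ∣ f a) : ∃ g : α →₀ ℤ, c • g = f :=
  ⟨f.mapRange (· / c) (Int.zero_ediv c), by ext a; simp [Int.mul_ediv_cancel' (hf a)]⟩

lemma tau_apply {V E : Type*} [DecidableEq E] (h : E → V) (estar : E) (x : E →₀ ℤ) :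
    tau h estar x = x.mapDomain h - Finsupp.single (h estar) (x estar) := by
  suffices tau h estar =
      Finsupp.lmapDomain ℤ ℤ h - Finsupp.lsingle (h estar) ∘ₗ Finsupp.lapply estar from
    LinearMap.congr_fun this x
  ext e
  by_cases he : e = estar
  · simp [tau, he]
  · simp [tau, he, Finsupp.single_eq_of_ne' he]

section Graph

variable {V E : Type*} [Fintype E] [DecidableEq V]

lemma lap_single (t h : E → V) (v : V) :
    lap t h (Finsupp.single v 1) =
      ∑ e ∈ Finset.univ.filter (fun e => t e = v), Finsupp.single (h e) 1
        - (outdeg t v : ℤ) • Finsupp.single v 1 := by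
  rw [lap, Finsupp.lift_single_one, ← Finset.sum_filter, Finset.sum_sub_distrib,
    Finset.sum_const, outdeg, natCast_zsmul]

lemma sigmaMap_single (t : E → V) (v : V) :
    sigmaMap t (Finsupp.single v 1) =
      ∑ e ∈ Finset.univ.filter (fun e => t e = v), Finsupp.single e 1 := by
  rw [sigmaMap, Finsupp.lift_single_one, ← Finset.sum_filter]

lemma sigmaMap_apply (t : E → V) (y : V →₀ ℤ) (e : E) : sigmaMap t y e = y (t e) := by
  suffices Finsupp.lapply e ∘ₗ sigmaMap t = Finsupp.lapply (t e) from LinearMap.congr_fun this y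
  ext v
  classical
  simp [sigmaMap_single, Finsupp.single_apply, eq_comm]

lemma lap_eq_of_outdeg_eq (t h : E → V) {k : ℕ} (hreg : ∀ v, outdeg t v = k) (y : V →₀ ℤ) :
    lap t h y = (sigmaMap t y).mapDomain h - (k : ℤ) • y := by
  suffices lap t h = Finsupp.lmapDomain ℤ ℤ h ∘ₗ sigmaMap t - (k : ℤ) • LinearMap.id from
    LinearMap.congr_fun this y
  ext v
  simp [lap_single, sigmaMap_single, hreg]

lemma exists_ne_of_one_lt_outdeg {t : E → V} (estar : E) {v : V} (hv : 1 < outdeg t v) :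
    ∃ e ≠ estar, t e = v := by
  obtain ⟨e, he, hne⟩ := Finset.exists_mem_ne hv estar
  exact ⟨e, hne, (Finset.mem_filter.1 he).2⟩

lemma phiMod_single_self (t h : E → V) (w : V) (c : ℤ) :
    phiMod t h w (Finsupp.single w c) = Finsupp.single w c := by
  rw [← Finsupp.smul_single_one, map_smul, phiMod, Finsupp.lift_single_one, if_pos rfl]

lemma psi_apply (t h : E → V) (estar : E) (y : V →₀ ℤ) :
    psi t h estar y = lap t h y - Finsupp.single (h estar) (y (t estar)) := by
  suffices psi t h estar = lap t h - Finsupp.lsingle (h estar) ∘ₗ Finsupp.lapply (t estar) from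
    LinearMap.congr_fun this y
  ext v
  by_cases hv : v = t estar
  · simp [psi, hv]
  · simp [psi, hv, Finsupp.single_eq_of_ne' hv]

variable [DecidableEq E]

lemma sum_lineEdge_out {M : Type*} [AddCommMonoid M] (t h : E → V) (e : E) (g : E → M) :
    ∑ p ∈ Finset.univ.filter (fun p : LineEdge t h => p.1.1 = e), g p.1.2 =
      ∑ f ∈ Finset.univ.filter (fun f => t f = h e), g f := by
  refine Finset.sum_bij' (fun p _ => p.1.2)
    (fun f hf => ⟨(e, f), ((Finset.mem_filter.1 hf).2).symm⟩) ?_ ?_ ?_ ?_ (fun _ _ => rfl)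
  · intro p hp
    simp only [Finset.mem_filter, Finset.mem_univ, true_and] at hp ⊢
    rw [← p.2, hp]
  · intro f _
    exact Finset.mem_filter.2 ⟨Finset.mem_univ _, rfl⟩
  · intro p hp
    simp only [Finset.mem_filter, Finset.mem_univ, true_and] at hp
    exact Subtype.ext (Prod.ext hp.symm rfl)
  · simp

lemma lap_lineGraph_single (t h : E → V) (e : E) :
    lap (fun p : LineEdge t h => p.1.1) (fun p => p.1.2) (Finsupp.single e 1) =
      sigmaMap t (Finsupp.single (h e) 1) - (outdeg t (h e) : ℤ) • Finsupp.single e 1 := by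
  have hdeg : outdeg (fun p : LineEdge t h => p.1.1) e = outdeg t (h e) := by
    simp only [outdeg, Finset.card_eq_sum_ones]
    exact sum_lineEdge_out t h e (fun _ => 1)
  rw [lap_single, hdeg, sigmaMap_single, ← sum_lineEdge_out t h e (fun f => Finsupp.single f 1)]

end Graph

section CriticalGroup

variable {V E : Type*} [Fintype E] [DecidableEq V] [DecidableEq E]
variable {t : E → V} (h : E → V) (estar : E) {k : ℕ} (hreg : ∀ v, outdeg t v = k)
include hreg

lemma tau_sigmaMap (y : V →₀ ℤ) :
    tau h estar (sigmaMap t y) = psi t h estar y + (k : ℤ) • y := by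
  rw [tau_apply, psi_apply, lap_eq_of_outdeg_eq t h hreg, sigmaMap_apply]
  abel

lemma phiMod_lineGraph_apply (x : E →₀ ℤ) :
    phiMod (fun p : LineEdge t h => p.1.1) (fun p => p.1.2) estar x =
      sigmaMap t (tau h estar x) - (k : ℤ) • x +
        ((k : ℤ) + 1) • Finsupp.single estar (x estar) := by
  suffices phiMod (fun p : LineEdge t h => p.1.1) (fun p => p.1.2) estar =
      sigmaMap t ∘ₗ tau h estar - (k : ℤ) • LinearMap.id +
        ((k : ℤ) + 1) • (Finsupp.lsingle estar ∘ₗ Finsupp.lapply estar) from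
    LinearMap.congr_fun this x
  ext e
  by_cases he : e = estar
  · subst he
    simp [phiMod, tau_apply]
  · simp [phiMod, he, lap_lineGraph_single, hreg, tau_apply, Finsupp.single_eq_of_ne' he]

lemma tau_phiMod_lineGraph (y : E →₀ ℤ) :
    tau h estar (phiMod (fun p : LineEdge t h => p.1.1) (fun p => p.1.2) estar y) =
      psi t h estar (tau h estar y) := by
  rw [phiMod_lineGraph_apply h estar hreg, map_add, map_sub, map_smul, map_smul,
    tau_sigmaMap h estar hreg, tau_apply h estar (Finsupp.single _ _)]
  simp

lemma smul_mem_range_phiMod_of_tau_mem_range_psi {x : E →₀ ℤ}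
    (hx : tau h estar x ∈ LinearMap.range (psi t h estar)) :
    (k : ℤ) • x ∈ LinearMap.range
      (phiMod (fun p : LineEdge t h => p.1.1) (fun p => p.1.2) estar) := by
  obtain ⟨u, hu⟩ := hx
  -- `φ (σ u) - φ x = k x + (k + 1) (π (σ u) - π x)`, and `φ` fixes every multiple of `e*`
  refine ⟨sigmaMap t u - x - ((k : ℤ) + 1) •
    (Finsupp.single estar (sigmaMap t u estar) - Finsupp.single estar (x estar)), ?_⟩
  rw [map_sub, map_sub, map_smul, map_sub, phiMod_single_self, phiMod_single_self,
    phiMod_lineGraph_apply h estar hreg, phiMod_lineGraph_apply h estar hreg,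
    tau_sigmaMap h estar hreg, hu, map_add, map_smul]
  module

lemma dvd_tau_apply_of_phiMod_eq_smul (hk : 1 < k) {x y : E →₀ ℤ}
    (hxy : phiMod (fun p : LineEdge t h => p.1.1) (fun p => p.1.2) estar y = (k : ℤ) • x)
    (v : V) : (k : ℤ) ∣ tau h estar y v := by
  obtain ⟨e, he, rfl⟩ := exists_ne_of_one_lt_outdeg estar (hk.trans_eq (hreg v).symm)
  have hcoeff := DFunLike.congr_fun (phiMod_lineGraph_apply h estar hreg y) e
  rw [hxy] at hcoeff
  simp only [Finsupp.add_apply, Finsupp.sub_apply, Finsupp.smul_apply, sigmaMap_apply,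
    Finsupp.single_eq_of_ne' (Ne.symm he), smul_eq_mul] at hcoeff
  exact ⟨x e + y e, by linarith⟩

lemma tau_mem_range_psi_iff (hk : 1 < k) (x : E →₀ ℤ) :
    tau h estar x ∈ LinearMap.range (psi t h estar) ↔
      (k : ℤ) • x ∈ LinearMap.range
        (phiMod (fun p : LineEdge t h => p.1.1) (fun p => p.1.2) estar) := by
  refine ⟨smul_mem_range_phiMod_of_tau_mem_range_psi h estar hreg, ?_⟩
  rintro ⟨y, hy⟩
  obtain ⟨z, hz⟩ := Finsupp.exists_smul_eq_of_forall_dvd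
    (dvd_tau_apply_of_phiMod_eq_smul h estar hreg hk hy)
  refine ⟨z, smul_right_injective (V →₀ ℤ) (by omega : (k : ℤ) ≠ 0) ?_⟩
  calc (k : ℤ) • psi t h estar z = psi t h estar (tau h estar y) := by rw [← map_smul, hz]
    _ = (k : ℤ) • tau h estar x := by rw [← tau_phiMod_lineGraph h estar hreg, hy, map_smul]

end CriticalGroup

/-- for a `k`-out-regular graph with `k > 1`, the kernel of the
induced homomorphism `τ̄ : K(𝓛G, e*) → cok ψ` is exactly the `k`-torsion
subgroup of `K(𝓛G, e*)`. -/
theorem ker_tau_bar_eq_k_torsion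
    {V E : Type*} [Fintype E] [DecidableEq V] [DecidableEq E]
    (t h : E → V) (estar : E) (k : ℕ) (hk : 1 < k)
    (hreg : ∀ v : V, outdeg t v = k) :
    ∀ τbar : ((E →₀ ℤ) ⧸ LinearMap.range
          (phiMod (fun p : LineEdge t h => p.1.1) (fun p : LineEdge t h => p.1.2) estar)) →ₗ[ℤ]
        ((V →₀ ℤ) ⧸ LinearMap.range (psi t h estar)),
      (∀ x : E →₀ ℤ,
        τbar (Submodule.Quotient.mk x) = Submodule.Quotient.mk (tau h estar x)) →
      LinearMap.ker τbar =
        Submodule.torsionBy ℤ ((E →₀ ℤ) ⧸ LinearMap.range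
          (phiMod (fun p : LineEdge t h => p.1.1) (fun p : LineEdge t h => p.1.2) estar)) (k : ℤ) := by
  intro τbar hτbar
  ext q
  obtain ⟨x, rfl⟩ := Submodule.Quotient.mk_surjective _ q
  rw [LinearMap.mem_ker, Submodule.mem_torsionBy_iff, hτbar, ← Submodule.Quotient.mk_smul,
    Submodule.Quotient.mk_eq_zero, Submodule.Quotient.mk_eq_zero]
  exact tau_mem_range_psi_iff h estar hreg hk x
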